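/- arXiv:2601.21466 — 4 statements merged into one kernel-verified Lean document; each statement's English description precedes it below -/
import Mathlib

section
/- Let a = (a₁,…,aₙ) ∈ ℍⁿ be a point whose components commute pairwise (a_l a_m = a_m a_l for all 1 ≤ l,m ≤ n), and let P, Q ∈ ℍ[q₁,…,qₙ]. Then (P*Q)(a) = 0 if P(a) = 0, and (P*Q)(a) = P(a) · Q(P(a)⁻¹ a₁ P(a), P(a)⁻¹ a₂ P(a), …, P(a)⁻¹ aₙ P(a)) if P(a) ≠ 0. -/
/-- The quaternions ℍ. -/
abbrev Hq : Type := Quaternion ℝ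

/-- The ring ℍ[q₁,…,qₙ] of slice regular polynomials in `n` quaternionic variables,
realized as the (noncommutative) monoid algebra over the multi-degrees `Fin n →₀ ℕ`:
the slice product satisfies `single m a * single l b = single (m+l) (a*b)`. -/
abbrev SlicePoly (n : ℕ) : Type := AddMonoidAlgebra Hq (Fin n →₀ ℕ)

/-- A right ideal of a (possibly noncommutative) ring. -/
structure RightIdeal (R : Type) [Ring R] where
  carrier : Set R
  zero_mem : (0 : R) ∈ carrier
  add_mem : ∀ {x y : R}, x ∈ carrier → y ∈ carrier → x + y ∈ carrier
  mul_mem_right : ∀ {x : R} (y : R), x ∈ carrier → x * y ∈ carrier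

/-- The right ideal generated by a set. -/
def RightIdeal.span {R : Type} [Ring R] (s : Set R) : RightIdeal R where
  carrier := {x | ∀ I : RightIdeal R, s ⊆ I.carrier → x ∈ I.carrier}
  zero_mem := fun I _ => I.zero_mem
  add_mem := fun hx hy I hs => I.add_mem (hx I hs) (hy I hs)
  mul_mem_right := fun y hx I hs => I.mul_mem_right y (hx I hs)

/-- Evaluation of `P = Σ q₁^{ℓ₁}⋯qₙ^{ℓₙ} a_ℓ` at a point `a ∈ ℍⁿ`:
`P(a) = Σ a₁^{ℓ₁}⋯aₙ^{ℓₙ} a_ℓ` (ordered product of powers, coefficient on the right). -/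
noncomputable def seval {n : ℕ} (P : SlicePoly n) (a : Fin n → Hq) : Hq :=
  ∑ m ∈ P.coeff.support, (List.ofFn fun i => a i ^ m i).prod * P.coeff m

/-- The regular conjugate `P^c`, obtained by conjugating each coefficient. -/
noncomputable def rconj {n : ℕ} (P : SlicePoly n) : SlicePoly n :=
  ∑ m ∈ P.coeff.support, AddMonoidAlgebra.single m (star (P.coeff m))

/-- The symmetrization `P^s = P * P^c`. -/
noncomputable def ssymm {n : ℕ} (P : SlicePoly n) : SlicePoly n := P * rconj P

/-- `V(I)`: the common zero set of the polynomials in `I`. -/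
def Vv {n : ℕ} (I : RightIdeal (SlicePoly n)) : Set (Fin n → Hq) :=
  {a | ∀ P ∈ I.carrier, seval P a = 0}

/-- The union `⋃_{K ∈ 𝕊} ℂ_Kⁿ` of the slices of `ℍⁿ`. -/
def slicePoints (n : ℕ) : Set (Fin n → Hq) :=
  {a | ∃ K : Hq, K ^ 2 = -1 ∧ ∀ i, ∃ x y : ℝ, a i = (x : Hq) + (y : Hq) * K}

/-- `V_c(I) = V(I) ∩ ⋃_{K ∈ 𝕊} ℂ_Kⁿ`. -/
def Vc {n : ℕ} (I : RightIdeal (SlicePoly n)) : Set (Fin n → Hq) :=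
  Vv I ∩ slicePoints n

/-- The spherical set `S_a = {(g⁻¹a₁g,…,g⁻¹aₙg) : g ∈ ℍ∖{0}}`. -/
def sphSet {n : ℕ} (a : Fin n → Hq) : Set (Fin n → Hq) :=
  {b | ∃ g : Hq, g ≠ 0 ∧ b = fun i => g⁻¹ * a i * g}

/-- The symmetrization `S_E = ⋃_{a ∈ E} S_a` of a set `E ⊆ ℍⁿ`. -/
def symmSet {n : ℕ} (E : Set (Fin n → Hq)) : Set (Fin n → Hq) :=
  ⋃ a ∈ E, sphSet a

/-- A right ideal is proper and nontrivial. -/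
def RightIdeal.ProperNontrivial {R : Type} [Ring R] (I : RightIdeal R) : Prop :=
  I.carrier ≠ Set.univ ∧ I.carrier ≠ {0}

/-- A right ideal `I` is quasi prime if `P*Q ∈ I` implies `P ∈ I` or `Q^s ∈ I`. -/
def QuasiPrime {n : ℕ} (I : RightIdeal (SlicePoly n)) : Prop :=
  ∀ P Q : SlicePoly n, P * Q ∈ I.carrier → P ∈ I.carrier ∨ ssymm Q ∈ I.carrier

/-- A right ideal `I` is completely prime if `P*Q ∈ I` and `P*I ⊆ I` imply
`P ∈ I` or `Q ∈ I`. -/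
def CompletelyPrime {n : ℕ} (I : RightIdeal (SlicePoly n)) : Prop :=
  ∀ P Q : SlicePoly n, P * Q ∈ I.carrier → (∀ R ∈ I.carrier, P * R ∈ I.carrier) →
    P ∈ I.carrier ∨ Q ∈ I.carrier

/-- The (right) radical `√I`: the intersection of all completely prime right ideals
containing `I`. -/
def radicalSet {n : ℕ} (I : RightIdeal (SlicePoly n)) : Set (SlicePoly n) :=
  ⋂ J ∈ {J : RightIdeal (SlicePoly n) | CompletelyPrime J ∧ I.carrier ⊆ J.carrier}, J.carrier

/-- `I` is radical if `√I = I`. -/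
def IsRadicalIdeal {n : ℕ} (I : RightIdeal (SlicePoly n)) : Prop :=
  radicalSet I = I.carrier

/-- The symmetrized ideal `S(I)`, the right ideal generated by `{P^s : P ∈ I}`. -/
noncomputable def symmIdeal {n : ℕ} (I : RightIdeal (SlicePoly n)) : RightIdeal (SlicePoly n) :=
  RightIdeal.span {P | ∃ Q ∈ I.carrier, P = ssymm Q}

/-- `V_c(I)` is reducible: it is the union `V_c(I₁) ∪ V_c(I₂)` for two proper nontrivial
right ideals, neither contained in the other. -/
def VcReducible {n : ℕ} (I : RightIdeal (SlicePoly n)) : Prop :=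
  ∃ I₁ I₂ : RightIdeal (SlicePoly n), I₁.ProperNontrivial ∧ I₂.ProperNontrivial ∧
    ¬ I₁.carrier ⊆ I₂.carrier ∧ ¬ I₂.carrier ⊆ I₁.carrier ∧
    Vc I = Vc I₁ ∪ Vc I₂

/-!
At a point with pairwise commuting components, `m ↦ a^m` is multiplicative and its values
commute, so the term `q^l c` of `Q` contributes `a^l P(a) c` to `(P*Q)(a)`. When `P(a) ≠ 0`,
conjugation by `P(a)` is multiplicative, hence `a^l P(a) = P(a) (P(a)⁻¹ a P(a))^l`.
-/

theorem List.prod_ofFn_mul_of_commute {M : Type*} [Monoid M] {k : ℕ} (f g : Fin k → M)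
    (h : ∀ i j, Commute (g i) (f j)) :
    (List.ofFn fun i => f i * g i).prod = (List.ofFn f).prod * (List.ofFn g).prod := by
  induction k with
  | zero => simp
  | succ k ih =>
    have hg : Commute (g 0) (List.ofFn fun i => f i.succ).prod :=
      Commute.list_prod_right _ _ <| List.forall_mem_ofFn_iff.2 fun j => h 0 j.succ
    simp only [List.ofFn_succ, List.prod_cons, ih _ _ fun i j => h i.succ j.succ, mul_assoc,
      hg.left_comm]

section

variable {n : ℕ}

open AddMonoidAlgebra

noncomputable def evalMonomial (a : Fin n → Hq) (m : Fin n →₀ ℕ) : Hq :=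
  (List.ofFn fun i => a i ^ m i).prod

theorem evalMonomial_conj {p : Hq} (hp : p ≠ 0) (a : Fin n → Hq) (m : Fin n →₀ ℕ) :
    evalMonomial (fun i => p⁻¹ * a i * p) m = p⁻¹ * evalMonomial a m * p := by
  let conj : Hq →* Hq := MulDistribMulAction.toMonoidHom Hq (ConjAct.toConjAct (Units.mk0 p hp)⁻¹)
  have hconj : ∀ x, conj x = p⁻¹ * x * p := fun x => by simp [conj, ConjAct.units_smul_def]
  simp only [evalMonomial, ← hconj, ← map_pow]
  rw [map_list_prod, List.map_ofFn, Function.comp_def]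

theorem seval_eq_sum (P : SlicePoly n) (a : Fin n → Hq) :
    seval P a = P.coeff.sum fun m c => evalMonomial a m * c :=
  rfl

theorem seval_zero (a : Fin n → Hq) : seval 0 a = 0 := by
  simp [seval]

theorem seval_add (P Q : SlicePoly n) (a : Fin n → Hq) :
    seval (P + Q) a = seval P a + seval Q a := by
  simp only [seval_eq_sum, coeff_add]
  exact Finsupp.sum_add_index' (fun _ => mul_zero _) fun _ => mul_add _

theorem seval_single (m : Fin n →₀ ℕ) (c : Hq) (a : Fin n → Hq) :
    seval (single m c) a = evalMonomial a m * c := by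
  rw [seval_eq_sum, coeff_single]
  exact Finsupp.sum_single_index (mul_zero _)

section Commuting

variable {a : Fin n → Hq} (hcomm : ∀ i j, Commute (a i) (a j))
include hcomm

theorem evalMonomial_add (m l : Fin n →₀ ℕ) :
    evalMonomial a (m + l) = evalMonomial a m * evalMonomial a l := by
  simp only [evalMonomial, Finsupp.add_apply, pow_add]
  exact List.prod_ofFn_mul_of_commute _ _ fun i j => (hcomm i j).pow_pow _ _

theorem commute_evalMonomial (m l : Fin n →₀ ℕ) :
    Commute (evalMonomial a m) (evalMonomial a l) :=
  Commute.list_prod_left _ _ <| List.forall_mem_ofFn_iff.2 fun i =>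
    Commute.list_prod_right _ _ <| List.forall_mem_ofFn_iff.2 fun j => (hcomm i j).pow_pow _ _

theorem seval_mul_single (P : SlicePoly n) (l : Fin n →₀ ℕ) (c : Hq) :
    seval (P * single l c) a = evalMonomial a l * seval P a * c := by
  induction P using AddMonoidAlgebra.induction_linear with
  | zero => simp [seval_zero]
  | add P P' hP hP' => rw [add_mul, seval_add, seval_add, hP, hP', mul_add, add_mul]
  | single m b =>
    rw [single_mul_single, seval_single, seval_single, evalMonomial_add hcomm,
      (commute_evalMonomial hcomm m l).eq]
    simp only [mul_assoc]

theorem seval_mul_eq_sum (P Q : SlicePoly n) :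
    seval (P * Q) a = Q.coeff.sum fun l c => evalMonomial a l * seval P a * c := by
  induction Q using AddMonoidAlgebra.induction_linear with
  | zero => simp [seval_zero]
  | add Q Q' hQ hQ' =>
    rw [mul_add, seval_add, hQ, hQ', coeff_add,
      Finsupp.sum_add_index' (fun _ => mul_zero _) fun _ _ _ => mul_add _ _ _]
  | single l c => rw [seval_mul_single hcomm, coeff_single, Finsupp.sum_single_index (mul_zero _)]

end Commuting

end

/-- Evaluation formula for the slice product at points with commuting components:
`(P*Q)(a) = 0` if `P(a) = 0`, and otherwise
`(P*Q)(a) = P(a) ⬝ Q(P(a)⁻¹ a₁ P(a), …, P(a)⁻¹ aₙ P(a))`. -/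
theorem seval_mul (n : ℕ) (a : Fin n → Hq)
    (hcomm : ∀ l m : Fin n, a l * a m = a m * a l) (P Q : SlicePoly n) :
    (seval P a = 0 → seval (P * Q) a = 0) ∧
    (seval P a ≠ 0 → seval (P * Q) a =
      seval P a * seval Q (fun i => (seval P a)⁻¹ * a i * seval P a)) := by
  rw [seval_mul_eq_sum hcomm, seval_eq_sum Q, Finsupp.sum, Finsupp.sum]
  refine ⟨fun h => by simp [h], fun h => ?_⟩
  rw [Finset.mul_sum]
  refine Finset.sum_congr rfl fun l _ => ?_
  rw [evalMonomial_conj h]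
  simp only [mul_assoc, mul_inv_cancel_left₀ h]
end

section
/- Let I be a right ideal of the ring (ℍ[q₁,…,qₙ], +, *). Then S_{V_c(I)} = V_c(S(I)); that is, the symmetrization of the slice algebraic set V_c(I) equals the slice algebraic set of the symmetrized ideal S(I). -/
/-! On the slice `ℂ_K`, write a point as `z_K = (x + yK)` with `z = x + iy ∈ ℂⁿ`. Then
`P(z_K) = u + K v`, where `u, v ∈ ℍ` are the real and imaginary parts of `Σ z^m P_m` and do not
depend on `K`, and `P^s(z_K) = (|u|² - |v|²) + 2 Re(u v̄) K`. So `P^s` vanishes at `z_K` iff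
`|u| = |v|` and `Re(u v̄) = 0`, a condition independent of `K` and implied by `P(z_K) = 0`;
since `g⁻¹ z_K g = z_{g⁻¹Kg}`, this gives `S_{V_c(I)} ⊆ V_c(S(I))`.

Conversely, let all `P^s`, `P ∈ I`, vanish at `z_K`. If some `P ∈ I` has `v_P ≠ 0`, applying
the condition to `P + Q c ∈ I` for all `c ∈ ℍ` yields `ū_P u_Q = v̄_P v_Q`, i.e.
`u_Q = u_P v_P⁻¹ v_Q`, so `J = -u_P v_P⁻¹` is an imaginary unit with `z_J ∈ V(I)`; otherwise
every `u_Q = 0` and `z_K ∈ V(I)` already. Finally any two imaginary units are conjugate. -/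

open Quaternion

theorem conj_mul_self_eq_neg_one {D : Type*} [DivisionRing D] {K g : D} (hK : K * K = -1)
    (hg : g ≠ 0) : g⁻¹ * K * g * (g⁻¹ * K * g) = -1 := by
  simp only [mul_assoc, mul_inv_cancel_left₀ hg]
  rw [← mul_assoc K, hK, neg_one_mul, mul_neg, inv_mul_cancel₀ hg]

namespace Quaternion

variable {R : Type*} [Field R] [LinearOrder R] [IsStrictOrderedRing R] {K L u v u' v' : ℍ[R]}

theorem re_eq_zero_of_mul_self_eq_neg_one (hK : K * K = -1) : K.re = 0 := by
  have h0 := congrArg (·.re) hK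
  have h1 := congrArg (·.imI) hK
  have h2 := congrArg (·.imJ) hK
  have h3 := congrArg (·.imK) hK
  simp only [re_mul, imI_mul, imJ_mul, imK_mul, re_neg, imI_neg, imJ_neg, imK_neg, re_one,
    imI_one, imJ_one, imK_one] at h0 h1 h2 h3
  nlinarith [sq_nonneg K.re, sq_nonneg K.imI, sq_nonneg K.imJ, sq_nonneg K.imK]

theorem normSq_eq_one_of_mul_self_eq_neg_one (hK : K * K = -1) : normSq K = 1 := by
  have h := sq_eq_neg_normSq.2 (re_eq_zero_of_mul_self_eq_neg_one hK)
  rw [sq, hK, neg_inj, ← coe_one, coe_inj] at h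
  exact h.symm

theorem coe_add_coe_mul_eq_zero_iff (hK : K * K = -1) {x y : R} :
    (x : ℍ[R]) + y * K = 0 ↔ x = 0 ∧ y = 0 := by
  refine ⟨fun h => ?_, fun ⟨hx, hy⟩ => by simp [hx, hy]⟩
  have hx : x = 0 := by
    simpa [coe_mul_eq_smul, re_eq_zero_of_mul_self_eq_neg_one hK] using congrArg (·.re) h
  subst hx
  have hK0 : K ≠ 0 := by rintro rfl; simp at hK
  have hy : (y : ℍ[R]) = 0 := by simpa [hK0] using h
  exact ⟨rfl, coe_injective hy⟩

theorem mul_eq_neg_mul_of_re_mul_eq_zero {g : ℍ[R]} (hK : K.re = 0) (hg : g.re = 0)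
    (h : (K * g).re = 0) : K * g = -(g * K) := by
  have hstar : star (K * g) = g * K := by
    rw [star_mul, star_eq_neg.2 hg, star_eq_neg.2 hK, neg_mul_neg]
  rw [← hstar]
  exact eq_neg_of_add_eq_zero_left (by rw [self_add_star, h]; simp)

theorem exists_conj_eq (hK : K * K = -1) (hL : L * L = -1) :
    ∃ g ≠ 0, g⁻¹ * K * g = L := by
  by_cases h : K + L = 0
  · obtain rfl : L = -K := eq_neg_of_add_eq_zero_right h
    -- an imaginary `g` orthogonal to `K` anticommutes with it
    obtain ⟨g, hg0, hgre, hdot⟩ : ∃ g : ℍ[R], g ≠ 0 ∧ g.re = 0 ∧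
        K.imI * g.imI + K.imJ * g.imJ + K.imK * g.imK = 0 := by
      by_cases hJK : K.imJ = 0 ∧ K.imK = 0
      · refine ⟨⟨0, 0, 1, 0⟩, fun h0 => ?_, rfl, by simp [hJK.1]⟩
        simpa using congrArg QuaternionAlgebra.imJ h0
      · refine ⟨⟨0, 0, -K.imK, K.imJ⟩, fun h0 => hJK ?_, rfl, by simp; ring⟩
        have h1 := congrArg QuaternionAlgebra.imJ h0
        have h2 := congrArg QuaternionAlgebra.imK h0
        simp at h1 h2
        exact ⟨h2, h1⟩
    have hKre := re_eq_zero_of_mul_self_eq_neg_one hK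
    have hanti := mul_eq_neg_mul_of_re_mul_eq_zero hKre hgre
      (by rw [re_mul, hKre, hgre]; linarith)
    refine ⟨g, hg0, ?_⟩
    rw [mul_assoc, hanti, mul_neg, inv_mul_cancel_left₀ hg0]
  · refine ⟨K + L, h, ?_⟩
    have : K * (K + L) = (K + L) * L := by rw [mul_add, add_mul, hK, hL, add_comm]
    rw [mul_assoc, this, inv_mul_cancel_left₀ h]

theorem normSq_eq_and_re_mul_star_eq_zero_of_add_mul_eq_zero (hK : K * K = -1)
    (h : u + K * v = 0) : normSq u = normSq v ∧ (u * star v).re = 0 := by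
  obtain rfl : u = -(K * v) := eq_neg_of_add_eq_zero_left h
  refine ⟨by rw [normSq_neg, map_mul, normSq_eq_one_of_mul_self_eq_neg_one hK, one_mul], ?_⟩
  rw [neg_mul, mul_assoc, self_mul_star, mul_coe_eq_smul]
  simp [re_eq_zero_of_mul_self_eq_neg_one hK]

theorem mul_inv_mul_self_eq_neg_one (hN : normSq u = normSq v) (hre : (u * star v).re = 0)
    (hv : v ≠ 0) : u * v⁻¹ * (u * v⁻¹) = -1 := by
  have hv' : normSq v ≠ 0 := normSq_ne_zero.2 hv
  have hsq : (u * star v) * (u * star v) = -(normSq v * normSq v : R) := by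
    rw [← sq, sq_eq_neg_normSq.2 hre, map_mul, normSq_star, hN]
  rw [inv_def, mul_smul_comm, smul_mul_smul_comm, hsq, smul_neg, smul_coe]
  rw [show (normSq v)⁻¹ * (normSq v)⁻¹ * (normSq v * normSq v) = 1 by field_simp]
  simp

theorem re_mul_comm (a b : ℍ[R]) : (a * b).re = (b * a).re := by
  simp only [re_mul]; ring

theorem re_star_mul_mul (a b c : ℍ[R]) : (star a * b * c).re = (a * star (b * c)).re := by
  rw [← re_star (a * star (b * c)), star_mul, star_star, mul_assoc, re_mul_comm]

theorem star_mul_eq_of_forall_normSq_add_mul_eq (hN' : normSq u' = normSq v')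
    (h : ∀ c, normSq (u + u' * c) = normSq (v + v' * c)) : star u * u' = star v * v' := by
  have hN : normSq u = normSq v := by simpa using h 0
  have hre : ∀ c, (star u * u' * c).re = (star v * v' * c).re := by
    intro c
    have hc := h c
    rw [normSq_add, normSq_add, map_mul, map_mul, hN, hN'] at hc
    rw [re_star_mul_mul, re_star_mul_mul]
    linarith
  have : normSq (star u * u' - star v * v') = 0 := by
    rw [normSq_def, sub_mul, re_sub, hre, sub_self]
  rwa [normSq_eq_zero, sub_eq_zero] at this

theorem eq_mul_inv_mul_of_star_mul_eq (hN : normSq u = normSq v) (hv : v ≠ 0)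
    (h : star u * u' = star v * v') : u' = u * v⁻¹ * v' := by
  have hu : u ≠ 0 := normSq_ne_zero.1 (hN ▸ normSq_ne_zero.2 hv)
  have key : u⁻¹ * u' = v⁻¹ * v' := by
    rw [inv_def, inv_def, smul_mul_assoc, smul_mul_assoc, h, hN]
  calc u' = u * (u⁻¹ * u') := (mul_inv_cancel_left₀ hu u').symm
    _ = u * v⁻¹ * v' := by rw [key, mul_assoc]

end Quaternion

namespace RightIdeal

variable {R : Type} [Ring R] {s : Set R} {I : RightIdeal R}

theorem subset_span : s ⊆ (span s).carrier := fun _ hx _ hs => hs hx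

theorem span_subset (h : s ⊆ I.carrier) : (span s).carrier ⊆ I.carrier := fun _ hx => hx I h

end RightIdeal

namespace AddMonoidAlgebra

variable {A M : Type*} [Semiring A]

noncomputable def coeffSum (f : M → A) : AddMonoidAlgebra A M →+ A where
  toFun P := P.coeff.sum fun m c => f m * c
  map_zero' := Finsupp.sum_zero_index
  map_add' _ _ := Finsupp.sum_add_index' (fun _ => mul_zero _) fun _ _ _ => mul_add _ _ _

theorem coeffSum_apply (f : M → A) (P : AddMonoidAlgebra A M) :
    coeffSum f P = P.coeff.sum fun m c => f m * c := rfl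

theorem coeffSum_single (f : M → A) (m : M) (c : A) :
    coeffSum f (single m c) = f m * c := by
  rw [coeffSum_apply, coeff_single, Finsupp.sum_single_index (mul_zero _)]

theorem coeffSum_mul_single_zero [AddMonoid M] (f : M → A) (P : AddMonoidAlgebra A M) (c : A) :
    coeffSum f (P * single 0 c) = coeffSum f P * c := by
  induction P using AddMonoidAlgebra.induction_linear with
  | zero => simp
  | add P Q hP hQ => rw [add_mul, map_add, map_add, hP, hQ, add_mul]
  | single m d => rw [single_mul_single, add_zero, coeffSum_single, coeffSum_single, mul_assoc]

end AddMonoidAlgebra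

namespace SlicePoly

open AddMonoidAlgebra

variable {n : ℕ}

theorem coeffSum_rconj (w : (Fin n →₀ ℕ) → ℝ) (P : SlicePoly n) :
    coeffSum (fun m => (w m : Hq)) (rconj P) = star (coeffSum (fun m => (w m : Hq)) P) := by
  rw [rconj, map_sum, coeffSum_apply, Finsupp.sum, star_sum]
  refine Finset.sum_congr rfl fun m _ => ?_
  rw [coeffSum_single, star_mul, star_coe, coe_commutes]

theorem seval_eq_coeffSum (P : SlicePoly n) (a : Fin n → Hq) :
    seval P a = coeffSum (fun m => (List.ofFn fun i => a i ^ m i).prod) P := rfl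

theorem seval_zero (a : Fin n → Hq) : seval (0 : SlicePoly n) a = 0 :=
  Finsupp.sum_zero_index

theorem seval_add (P Q : SlicePoly n) (a : Fin n → Hq) :
    seval (P + Q) a = seval P a + seval Q a :=
  map_add (coeffSum _) P Q

def monomialEval (z : Fin n → ℂ) (m : Fin n →₀ ℕ) : ℂ := ∏ i, z i ^ m i

theorem monomialEval_add (z : Fin n → ℂ) (l m : Fin n →₀ ℕ) :
    monomialEval z (l + m) = monomialEval z l * monomialEval z m := by
  simp only [monomialEval, Finsupp.add_apply, pow_add, Finset.prod_mul_distrib]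

noncomputable def slicePoint (K : Hq) (z : Fin n → ℂ) : Fin n → Hq :=
  fun i => ((z i).re : Hq) + ((z i).im : Hq) * K

noncomputable def sliceRe (z : Fin n → ℂ) : SlicePoly n →+ Hq :=
  coeffSum fun m => ((monomialEval z m).re : Hq)

noncomputable def sliceIm (z : Fin n → ℂ) : SlicePoly n →+ Hq :=
  coeffSum fun m => ((monomialEval z m).im : Hq)

theorem sliceRe_mul_single_zero (z : Fin n → ℂ) (P : SlicePoly n) (c : Hq) :
    sliceRe z (P * single 0 c) = sliceRe z P * c :=
  coeffSum_mul_single_zero _ P c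

theorem sliceIm_mul_single_zero (z : Fin n → ℂ) (P : SlicePoly n) (c : Hq) :
    sliceIm z (P * single 0 c) = sliceIm z P * c :=
  coeffSum_mul_single_zero _ P c

theorem sliceRe_rconj (z : Fin n → ℂ) (P : SlicePoly n) :
    sliceRe z (rconj P) = star (sliceRe z P) :=
  coeffSum_rconj _ P

theorem sliceIm_rconj (z : Fin n → ℂ) (P : SlicePoly n) :
    sliceIm z (rconj P) = star (sliceIm z P) :=
  coeffSum_rconj _ P

section

variable {K : Hq}

theorem prod_ofFn_slicePoint_pow (hK : K * K = -1) (z : Fin n → ℂ) (m : Fin n →₀ ℕ) :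
    (List.ofFn fun i => slicePoint K z i ^ m i).prod = Complex.liftAux K hK (monomialEval z m) := by
  have hpt : ∀ i, slicePoint K z i = Complex.liftAux K hK (z i) := fun i => by
    simp [slicePoint, Complex.liftAux_apply, Quaternion.algebraMap_def, coe_mul_eq_smul]
  simp_rw [hpt, ← map_pow]
  rw [show (fun i => Complex.liftAux K hK (z i ^ m i)) = Complex.liftAux K hK ∘ fun i => z i ^ m i
    from rfl, ← List.map_ofFn, ← map_list_prod, List.prod_ofFn, monomialEval]

theorem seval_slicePoint_eq_coeffSum (hK : K * K = -1) (z : Fin n → ℂ) (P : SlicePoly n) :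
    seval P (slicePoint K z) = coeffSum (fun m => Complex.liftAux K hK (monomialEval z m)) P := by
  simp_rw [seval_eq_coeffSum, prod_ofFn_slicePoint_pow hK]

theorem liftAux_apply_mul (hK : K * K = -1) (w : ℂ) (c : Hq) :
    Complex.liftAux K hK w * c = (w.re : Hq) * c + K * ((w.im : Hq) * c) := by
  rw [Complex.liftAux_apply, Quaternion.algebraMap_def, add_mul, smul_mul_assoc,
    ← mul_smul_comm, ← coe_mul_eq_smul]

theorem seval_slicePoint (hK : K * K = -1) (z : Fin n → ℂ) (P : SlicePoly n) :
    seval P (slicePoint K z) = sliceRe z P + K * sliceIm z P := by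
  rw [seval_slicePoint_eq_coeffSum hK]
  induction P using AddMonoidAlgebra.induction_linear with
  | zero => simp
  | add P Q hP hQ => rw [map_add, map_add, map_add, hP, hQ, mul_add]; abel
  | single m c => rw [sliceRe, sliceIm, coeffSum_single, coeffSum_single, coeffSum_single,
      liftAux_apply_mul hK]

theorem seval_mul_single_slicePoint (hK : K * K = -1) (z : Fin n → ℂ) (P : SlicePoly n)
    (l : Fin n →₀ ℕ) (d : Hq) :
    seval (P * single l d) (slicePoint K z)
      = Complex.liftAux K hK (monomialEval z l) * seval P (slicePoint K z) * d := by
  simp only [seval_slicePoint_eq_coeffSum hK]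
  induction P using AddMonoidAlgebra.induction_linear with
  | zero => simp
  | add P Q hP hQ => rw [add_mul, map_add, map_add, hP, hQ, mul_add, add_mul]
  | single m c =>
    rw [single_mul_single, coeffSum_single, coeffSum_single, monomialEval_add, mul_comm, map_mul]
    simp only [mul_assoc]

theorem seval_mul_slicePoint (hK : K * K = -1) (z : Fin n → ℂ) (P Q : SlicePoly n) :
    seval (P * Q) (slicePoint K z)
      = seval P (slicePoint K z) * sliceRe z Q + K * seval P (slicePoint K z) * sliceIm z Q := by
  induction Q using AddMonoidAlgebra.induction_linear with
  | zero => simp [seval_zero]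
  | add Q R hQ hR =>
    rw [mul_add, seval_add, hQ, hR, map_add, map_add]
    noncomm_ring
  | single l d =>
    rw [seval_mul_single_slicePoint hK, sliceRe, sliceIm, coeffSum_single, coeffSum_single,
      liftAux_apply_mul hK, coe_commutes _ (seval P _), coe_commutes _ (seval P _)]
    noncomm_ring

theorem seval_ssymm_slicePoint (hK : K * K = -1) (z : Fin n → ℂ) (P : SlicePoly n) :
    seval (ssymm P) (slicePoint K z)
      = ((normSq (sliceRe z P) - normSq (sliceIm z P) : ℝ) : Hq)
        + ((2 * (sliceRe z P * star (sliceIm z P)).re : ℝ) : Hq) * K := by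
  set u := sliceRe z P
  set v := sliceIm z P
  have hKK : K * (K * v) * star v = -(v * star v) := by rw [← mul_assoc, hK, neg_one_mul, neg_mul]
  have hvu : v * star u = star (u * star v) := by rw [star_mul, star_star]
  calc seval (ssymm P) (slicePoint K z) = (u + K * v) * star u + K * (u + K * v) * star v := by
        rw [ssymm, seval_mul_slicePoint hK, seval_slicePoint hK, sliceRe_rconj, sliceIm_rconj]
    _ = u * star u - v * star v + K * (u * star v + v * star u) := by
        rw [mul_add K, add_mul (K * u), hKK]
        noncomm_ring
    _ = _ := by
        rw [self_mul_star, self_mul_star, hvu, self_add_star', coe_sub, coe_commutes]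

theorem seval_ssymm_slicePoint_eq_zero_iff (hK : K * K = -1) (z : Fin n → ℂ)
    (P : SlicePoly n) :
    seval (ssymm P) (slicePoint K z) = 0 ↔ normSq (sliceRe z P) = normSq (sliceIm z P) ∧
      (sliceRe z P * star (sliceIm z P)).re = 0 := by
  rw [seval_ssymm_slicePoint hK, coe_add_coe_mul_eq_zero_iff hK, sub_eq_zero, mul_eq_zero]
  simp only [two_ne_zero, false_or]

end

noncomputable def slicePointZeroIdeal {K : Hq} (hK : K * K = -1) (z : Fin n → ℂ) :
    RightIdeal (SlicePoly n) where
  carrier := {W | seval W (slicePoint K z) = 0}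
  zero_mem := seval_zero _
  add_mem {W W'} hW hW' := show seval (W + W') _ = 0 by rw [seval_add, hW, hW', add_zero]
  mul_mem_right {W} R hW := show seval (W * R) _ = 0 by
    rw [seval_mul_slicePoint hK, hW]
    simp only [zero_mul, mul_zero, add_zero]

theorem mem_slicePoints_iff {a : Fin n → Hq} :
    a ∈ slicePoints n ↔ ∃ K : Hq, K * K = -1 ∧ ∃ z, a = slicePoint K z := by
  constructor
  · rintro ⟨K, hK, ha⟩
    choose x y hxy using ha
    exact ⟨K, by rwa [← sq], fun i => ⟨x i, y i⟩, funext hxy⟩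
  · rintro ⟨K, hK, z, rfl⟩
    exact ⟨K, by rwa [sq], fun i => ⟨(z i).re, (z i).im, rfl⟩⟩

theorem slicePoint_mem_slicePoints {K : Hq} (hK : K * K = -1) (z : Fin n → ℂ) :
    slicePoint K z ∈ slicePoints n :=
  mem_slicePoints_iff.2 ⟨K, hK, z, rfl⟩

theorem conj_slicePoint {g : Hq} (hg : g ≠ 0) (K : Hq) (z : Fin n → ℂ) :
    (fun i => g⁻¹ * slicePoint K z i * g) = slicePoint (g⁻¹ * K * g) z := by
  funext i
  have hcomm : ∀ r : ℝ, g⁻¹ * (r : Hq) = r * g⁻¹ := fun r => (coe_commutes r g⁻¹).symm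
  simp only [slicePoint, mul_add, add_mul, ← mul_assoc, hcomm]
  simp only [mul_assoc, inv_mul_cancel₀ hg, mul_one]

theorem exists_slicePoint_mem_Vv {K : Hq} (hK : K * K = -1) {z : Fin n → ℂ}
    {I : RightIdeal (SlicePoly n)}
    (hI : ∀ Q ∈ I.carrier, normSq (sliceRe z Q) = normSq (sliceIm z Q) ∧
      (sliceRe z Q * star (sliceIm z Q)).re = 0) :
    ∃ J : Hq, J * J = -1 ∧ slicePoint J z ∈ Vv I := by
  by_cases hv : ∀ Q ∈ I.carrier, sliceIm z Q = 0
  · refine ⟨K, hK, fun Q hQ => ?_⟩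
    have huQ : sliceRe z Q = 0 := by simpa [hv Q hQ] using (hI Q hQ).1
    rw [seval_slicePoint hK, huQ, hv Q hQ, mul_zero, add_zero]
  obtain ⟨P, hP, hvP⟩ : ∃ P ∈ I.carrier, sliceIm z P ≠ 0 := by simpa using hv
  have hJ : -(sliceRe z P * (sliceIm z P)⁻¹) * -(sliceRe z P * (sliceIm z P)⁻¹) = -1 := by
    rw [neg_mul_neg]
    exact mul_inv_mul_self_eq_neg_one (hI P hP).1 (hI P hP).2 hvP
  refine ⟨_, hJ, fun Q hQ => ?_⟩
  -- polarize the condition along `P + Q * c ∈ I`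
  have hPQ : ∀ c, normSq (sliceRe z P + sliceRe z Q * c)
      = normSq (sliceIm z P + sliceIm z Q * c) := fun c => by
      have := (hI _ (I.add_mem hP (I.mul_mem_right (single 0 c) hQ))).1
      rwa [map_add (sliceRe z), map_add (sliceIm z), sliceRe_mul_single_zero,
        sliceIm_mul_single_zero] at this
  rw [seval_slicePoint hJ, eq_mul_inv_mul_of_star_mul_eq (hI P hP).1 hvP
    (star_mul_eq_of_forall_normSq_add_mul_eq (hI Q hQ).1 hPQ)]
  noncomm_ring

end SlicePoly

open SlicePoly

section

variable {n : ℕ}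

theorem ssymm_mem_symmIdeal {I : RightIdeal (SlicePoly n)} {Q : SlicePoly n}
    (hQ : Q ∈ I.carrier) : ssymm Q ∈ (symmIdeal I).carrier :=
  RightIdeal.subset_span ⟨Q, hQ, rfl⟩

theorem mem_symmSet_iff {E : Set (Fin n → Hq)} {b : Fin n → Hq} :
    b ∈ symmSet E ↔ ∃ a ∈ E, ∃ g : Hq, g ≠ 0 ∧ b = fun i => g⁻¹ * a i * g := by
  simp [symmSet, sphSet]

theorem symmSet_Vc_subset (I : RightIdeal (SlicePoly n)) : symmSet (Vc I) ⊆ Vc (symmIdeal I) := by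
  intro b hb
  obtain ⟨a, ⟨haV, haS⟩, g, hg, rfl⟩ := mem_symmSet_iff.1 hb
  obtain ⟨K, hK, z, rfl⟩ := mem_slicePoints_iff.1 haS
  have hK' := conj_mul_self_eq_neg_one hK hg
  rw [conj_slicePoint hg]
  refine ⟨fun W hW => RightIdeal.span_subset (I := slicePointZeroIdeal hK' z) ?_ hW,
    slicePoint_mem_slicePoints hK' z⟩
  rintro _ ⟨Q, hQ, rfl⟩
  -- the vanishing condition of `Q^s` on the slice over `z` does not involve the imaginary unit
  refine (seval_ssymm_slicePoint_eq_zero_iff hK' z Q).2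
    (normSq_eq_and_re_mul_star_eq_zero_of_add_mul_eq_zero hK ?_)
  rw [← seval_slicePoint hK]
  exact haV Q hQ

theorem Vc_symmIdeal_subset (I : RightIdeal (SlicePoly n)) :
    Vc (symmIdeal I) ⊆ symmSet (Vc I) := by
  rintro b ⟨hbV, hbS⟩
  obtain ⟨K, hK, z, rfl⟩ := mem_slicePoints_iff.1 hbS
  obtain ⟨J, hJ, hJV⟩ := exists_slicePoint_mem_Vv hK fun Q hQ =>
    (seval_ssymm_slicePoint_eq_zero_iff hK z Q).1 (hbV _ (ssymm_mem_symmIdeal hQ))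
  obtain ⟨g, hg, rfl⟩ := exists_conj_eq hJ hK
  exact mem_symmSet_iff.2 ⟨slicePoint J z, ⟨hJV, slicePoint_mem_slicePoints hJ z⟩, g, hg,
    (conj_slicePoint hg J z).symm⟩

end

/-- The symmetrization of the slice algebraic set `V_c(I)` equals the slice algebraic set
of the symmetrized ideal: `S_{V_c(I)} = V_c(S(I))`. -/
theorem symmSet_Vc_eq_Vc_symmIdeal (n : ℕ) (I : RightIdeal (SlicePoly n)) :
    symmSet (Vc I) = Vc (symmIdeal I) :=
  (symmSet_Vc_subset I).antisymm (Vc_symmIdeal_subset I)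
end

section
/- Every completely prime right ideal of the ring (ℍ[q₁,…,qₙ], +, *) is quasi prime. -/
/-!
The symmetrization `Q^s` has coefficients `∑_{a+b=m} Q_a * star Q_b`, which are fixed by
quaternionic conjugation and hence real. A polynomial with real coefficients is central, so
`P * Q ∈ I` gives `Q^s * P = P * Q * Q^c ∈ I` and `Q^s * I = I * Q^s ⊆ I`; complete primality
applied to the pair `(Q^s, P)` then yields `Q^s ∈ I` or `P ∈ I`.
-/

open Finset

theorem AddMonoidAlgebra.commute_of_forall_commute_coeff {R M : Type*} [Semiring R]
    [AddCommMonoid M] {x : AddMonoidAlgebra R M} (hx : ∀ m r, Commute (x.coeff m) r)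
    (y : AddMonoidAlgebra R M) : Commute x y := by
  rw [← x.sum_coeff_single]
  exact Commute.sum_left _ _ _ fun m _ =>
    AddMonoidAlgebra.single_commute (fun _ => AddCommute.all _ _) (hx m) y

theorem Quaternion.commute_of_star_eq_self {R : Type*} [CommRing R] [NoZeroDivisors R]
    [CharZero R] {a : Quaternion R} (ha : star a = a) (b : Quaternion R) : Commute a b := by
  rw [Quaternion.star_eq_self.mp ha]
  exact Quaternion.coe_commutes _ _

section SlicePoly

variable {n : ℕ}

theorem coeff_rconj (P : SlicePoly n) (m : Fin n →₀ ℕ) :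
    (rconj P).coeff m = star (P.coeff m) := by
  classical
  simp only [rconj, AddMonoidAlgebra.coeff_sum, AddMonoidAlgebra.coeff_single,
    Finsupp.finsetSum_apply, Finsupp.single_apply, Finset.sum_ite_eq', Finsupp.mem_support_iff,
    ne_eq, ite_not, ite_eq_right_iff]
  intro hm
  rw [hm, star_zero]

theorem coeff_ssymm (Q : SlicePoly n) (m : Fin n →₀ ℕ) :
    (ssymm Q).coeff m = ∑ p ∈ antidiagonal m, Q.coeff p.1 * star (Q.coeff p.2) := by
  simp only [ssymm, ← coeff_rconj]
  exact AddMonoidAlgebra.coeff_mul_antidiag _ _ _ _ mem_antidiagonal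

theorem star_coeff_ssymm (Q : SlicePoly n) (m : Fin n →₀ ℕ) :
    star ((ssymm Q).coeff m) = (ssymm Q).coeff m := by
  simp only [coeff_ssymm, star_sum, star_mul, star_star]
  exact (Finsupp.sum_antidiagonal_swap m fun a b => Q.coeff a * star (Q.coeff b)).symm

theorem commute_ssymm (Q R : SlicePoly n) : Commute (ssymm Q) R :=
  AddMonoidAlgebra.commute_of_forall_commute_coeff
    (fun m => Quaternion.commute_of_star_eq_self (star_coeff_ssymm Q m)) R

theorem CompletelyPrime.mem_or_mem_of_mul_mem_of_commute {I : RightIdeal (SlicePoly n)}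
    (hI : CompletelyPrime I) {P C : SlicePoly n} (hC : ∀ R, Commute C R)
    (hPC : P * C ∈ I.carrier) : P ∈ I.carrier ∨ C ∈ I.carrier :=
  (hI C P ((hC P).eq ▸ hPC) fun R hR => (hC R).eq ▸ I.mul_mem_right C hR).symm

end SlicePoly

/-- Every completely prime right ideal of ℍ[q₁,…,qₙ] is quasi prime. -/
theorem quasiPrime_of_completelyPrime (n : ℕ) (I : RightIdeal (SlicePoly n))
    (hcp : CompletelyPrime I) : QuasiPrime I := by
  intro P Q hPQ
  have hPQs : P * ssymm Q ∈ I.carrier := by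
    rw [ssymm, ← mul_assoc]
    exact I.mul_mem_right _ hPQ
  exact hcp.mem_or_mem_of_mul_mem_of_commute (commute_ssymm Q) hPQs
end

section
/- For every slice regular polynomial P ∈ ℍ[q₁,…,qₙ], one has P * P^c = P^c * P, and every coefficient of the symmetrization P^s = P * P^c is a real number. -/
/-!
Coefficientwise conjugation `P ↦ P^c` is an involutive anti-automorphism of `ℍ[q₁,…,qₙ]`,
because the variables commute with each other. Hence `(P * P^c)^c = P * P^c`, so every
coefficient of `P^s` is fixed by quaternionic conjugation, i.e. real. Moreover `P + P^c` has real,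
hence central, coefficients, so it is central, and `P^c = (P + P^c) - P` commutes with `P`.
-/

namespace AddMonoidAlgebra

variable {R G : Type*}

theorem commute_of_forall_coeff_commute [Semiring R] [AddCommMonoid G] {x : R[G]}
    (hx : ∀ m r, Commute (x.coeff m) r) (y : R[G]) : Commute x y := by
  rw [← sum_coeff_single x]
  exact Commute.sum_left _ _ _ fun m _ =>
    single_commute (fun m' => AddCommute.all m m') (hx m) y

section StarRing

variable [Semiring R] [StarRing R]

theorem map_star_map_star (x : R[G]) :
    map (starAddEquiv : R ≃+ R).toAddMonoidHom (map starAddEquiv.toAddMonoidHom x) = x := by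
  ext; simp

variable [AddCommMonoid G]

theorem map_star_mul (x y : R[G]) :
    map (starAddEquiv : R ≃+ R).toAddMonoidHom (x * y) =
      map starAddEquiv.toAddMonoidHom y * map starAddEquiv.toAddMonoidHom x := by
  induction x using induction_linear with
  | zero => simp
  | add x x' hx hx' =>
    rw [add_mul, AddMonoidAlgebra.map_add, hx, hx', AddMonoidAlgebra.map_add, mul_add]
  | single m r =>
    induction y using induction_linear with
    | zero => simp
    | add y y' hy hy' =>
      rw [mul_add, AddMonoidAlgebra.map_add, hy, hy', AddMonoidAlgebra.map_add, add_mul]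
    | single l s => simp [add_comm]

theorem map_star_mul_map_star (x : R[G]) :
    map (starAddEquiv : R ≃+ R).toAddMonoidHom (x * map starAddEquiv.toAddMonoidHom x) =
      x * map starAddEquiv.toAddMonoidHom x := by
  rw [map_star_mul, map_star_map_star]

end StarRing

theorem commute_map_star_self [Ring R] [StarRing R] [AddCommMonoid G]
    (hR : ∀ a r : R, Commute (a + star a) r) (x : R[G]) :
    Commute x (map (starAddEquiv : R ≃+ R).toAddMonoidHom x) := by
  have hcentral : Commute (x + map starAddEquiv.toAddMonoidHom x) x :=
    commute_of_forall_coeff_commute (fun m r => by simpa using hR (x.coeff m) r) x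
  simpa using hcentral.symm.sub_right (Commute.refl x)

end AddMonoidAlgebra

open AddMonoidAlgebra

theorem rconj_eq_map_star {n : ℕ} (P : SlicePoly n) :
    rconj P = map (starAddEquiv : Hq ≃+ Hq).toAddMonoidHom P := by
  conv_rhs => rw [← sum_coeff_single P]
  simp [rconj, Finsupp.sum, AddMonoidAlgebra.map_sum]

/-- For every slice regular polynomial `P`, one has `P * P^c = P^c * P`, and every
coefficient of the symmetrization `P^s = P * P^c` is real. -/
theorem symm_comm_and_real_coeffs (n : ℕ) (P : SlicePoly n) :
    P * rconj P = rconj P * P ∧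
    ∀ m : Fin n →₀ ℕ, ∃ r : ℝ, (P * rconj P).coeff m = (r : Hq) := by
  rw [rconj_eq_map_star]
  refine ⟨commute_map_star_self (fun a r => ?_) P, fun m => ⟨_, Quaternion.star_eq_self.mp ?_⟩⟩
  · rw [Quaternion.self_add_star']
    exact Quaternion.coe_commute _ r
  · conv_rhs => rw [← map_star_mul_map_star P]
    simp
end
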